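/- Let (f_n)_{n∈ℕ} be a martingale with values in a Hilbert space H with f_0 = 0. Then for every N ∈ ℕ, E(S_N f) ≤ √3 · E(f*_N). -/

import Mathlib

open MeasureTheory Filter Set Finset

open scoped RealInnerProductSpace

/-- Running maximum `f*_n(ω) = max_{k ≤ n} ‖f_k(ω)‖` of a vector-valued process. -/
noncomputable def mstar {Ω X : Type*} [NormedAddCommGroup X] (f : ℕ → Ω → X) (n : ℕ) (ω : Ω) : ℝ :=
  (Finset.range (n + 1)).sup' (Finset.nonempty_range_iff.mpr (Nat.succ_ne_zero n))
    (fun k => ‖f k ω‖)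

/-- Elementary real inequality used in the jump case of the Bellman-function step. -/
lemma davis_aux_real (A t m : ℝ) (hm : 0 < m) (ht : m < t) (hA : (t - m)^2 ≤ A) :
    (A - 2*t^2)/t - t ≤ (A - t^2 - m^2)/m - m := by
  have ht0 : (0:ℝ) < t := hm.trans ht
  have h1 : (A - 2*t^2)/t - t = (A - 3*t^2)/t := by field_simp; ring
  have h2 : (A - t^2 - m^2)/m - m = (A - t^2 - 2*m^2)/m := by field_simp; ring
  rw [h1, h2, div_le_div_iff₀ ht0 hm]
  nlinarith [mul_nonneg (sub_pos.2 ht).le (sq_nonneg m), sq_nonneg (t - m),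
    mul_nonneg (sub_pos.2 ht).le (sub_nonneg.2 hA)]

/-- The key deterministic one-step inequality for the Bellman function
`U(x,q,m) = (q - ‖x‖² - m²)/m - m`. -/
lemma davis_key_ineq {H : Type*} [NormedAddCommGroup H] [InnerProductSpace ℝ H]
    (x d : H) (q m : ℝ) (hq : 0 ≤ q) (hxm : ‖x‖ ≤ m) (hqm : m = 0 → q = 0) :
    (q + ‖d‖^2 - ‖x + d‖^2 - (max m ‖x + d‖)^2) / (max m ‖x + d‖) - max m ‖x + d‖
      ≤ (q - ‖x‖^2 - m^2) / m - m - 2 * ⟪x, d⟫ / m := by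
  have hm0 : 0 ≤ m := le_trans (norm_nonneg x) hxm
  have hexp : ‖x + d‖^2 = ‖x‖^2 + 2*⟪x, d⟫ + ‖d‖^2 := norm_add_sq_real x d
  rcases eq_or_lt_of_le hm0 with hm | hm
  · -- m = 0
    have hmeq : m = 0 := hm.symm
    have hx0 : x = 0 := norm_le_zero_iff.1 (hxm.trans_eq hmeq)
    have hq0 : q = 0 := hqm hmeq
    subst hmeq; subst hx0; subst hq0
    have hR : ((0:ℝ) - ‖(0:H)‖^2 - 0^2) / 0 - 0 - 2 * ⟪(0:H), d⟫ / 0 = 0 := by simp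
    rw [hR]
    have hmax : max (0:ℝ) ‖(0:H) + d‖ = ‖d‖ := by simp
    rw [hmax]
    simp only [zero_add]
    rcases eq_or_ne d 0 with hd | hd
    · simp [hd]
    · have hdpos : 0 < ‖d‖ := norm_pos_iff.2 hd
      have h1 : (‖d‖^2 - ‖d‖^2 - ‖d‖^2) / ‖d‖ = -‖d‖ := by
        field_simp
        ring
      rw [h1]; linarith
  · rcases le_or_gt ‖x + d‖ m with ht | ht
    · rw [max_eq_left ht]
      have hnum : q + ‖d‖^2 - ‖x + d‖^2 - m^2 = (q - ‖x‖^2 - m^2) - 2*⟪x, d⟫ := by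
        rw [hexp]; ring
      rw [hnum, sub_div]
      apply le_of_eq
      ring
    · rw [max_eq_right ht.le]
      set t := ‖x + d‖ with htdef
      have htm : t - m ≤ ‖d‖ := by
        have h1 : t ≤ ‖x‖ + ‖d‖ := norm_add_le x d
        linarith
      have hA : (t - m)^2 ≤ q + ‖d‖^2 := by nlinarith [sub_pos.2 ht]
      have h0 : q - ‖x‖^2 - m^2 - 2 * ⟪x, d⟫ = (q + ‖d‖^2) - t^2 - m^2 := by
        rw [htdef, hexp]; ring
      have hmain := davis_aux_real (q + ‖d‖^2) t m hm ht hA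
      have hL : q + ‖d‖^2 - t^2 - t^2 = (q + ‖d‖^2) - 2*t^2 := by ring
      calc (q + ‖d‖^2 - t^2 - t^2) / t - t = ((q + ‖d‖^2) - 2*t^2)/t - t := by rw [hL]
        _ ≤ ((q + ‖d‖^2) - t^2 - m^2)/m - m := hmain
        _ = (q - ‖x‖^2 - m^2) / m - m - 2 * ⟪x, d⟫ / m := by
            have hm' : (m:ℝ) ≠ 0 := ne_of_gt hm
            field_simp
            linarith [h0]

private lemma davis_indicator_integral {Ω : Type*} {mΩ : MeasurableSpace Ω} (μ : Measure Ω)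
    {s : Set Ω} (hs : MeasurableSet s) (ψ : Ω → ℝ) :
    ∫ ω, Set.indicator s ψ ω ∂μ = ∫ ω in s, ψ ω ∂μ :=
  integral_indicator hs

private lemma davis_inner_integral {Ω : Type*} {mΩ : MeasurableSpace Ω} (ν : Measure Ω)
    {H : Type*} [NormedAddCommGroup H] [InnerProductSpace ℝ H] [CompleteSpace H]
    {Y : Ω → H} (hY : Integrable Y ν) (c : H) :
    ∫ ω, ⟪c, Y ω⟫ ∂ν = ⟪c, ∫ ω, Y ω ∂ν⟫ :=
  integral_inner hY c

/-- If `g` is bounded and measurable w.r.t. a sub-σ-algebra `m`, and the integral of `Y`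
vanishes on every `m`-measurable set, then `∫ ⟪g, Y⟫ = 0`. -/
lemma davis_integral_inner_zero {Ω : Type*} {mΩ : MeasurableSpace Ω} {μ : Measure Ω}
    {H : Type*} [NormedAddCommGroup H] [InnerProductSpace ℝ H] [CompleteSpace H]
    {m : MeasurableSpace Ω} (hm : m ≤ mΩ) {g Y : Ω → H}
    (hg : StronglyMeasurable[m] g) (hgC : ∀ ω, ‖g ω‖ ≤ 1)
    (hY : Integrable Y μ)
    (hY0 : ∀ s : Set Ω, MeasurableSet[m] s → ∫ ω in s, Y ω ∂μ = 0) :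
    ∫ ω, ⟪g ω, Y ω⟫ ∂μ = 0 := by
  have hint : ∀ φ : @SimpleFunc Ω m H, Integrable (fun ω => ⟪φ ω, Y ω⟫) μ := by
    intro φ
    obtain ⟨C, hC⟩ := φ.exists_forall_norm_le
    refine Integrable.mono' (hY.norm.const_mul C) ?_ ?_
    · exact AEStronglyMeasurable.inner
        ((φ.stronglyMeasurable.mono hm).aestronglyMeasurable) hY.1
    · exact Eventually.of_forall fun ω =>
        (norm_inner_le_norm _ _).trans
          (mul_le_mul_of_nonneg_right (hC ω) (norm_nonneg _))
  have hsimple : ∀ φ : @SimpleFunc Ω m H, ∫ ω, ⟪φ ω, Y ω⟫ ∂μ = 0 := by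
    intro φ
    induction φ using SimpleFunc.induction with
    | const c hs =>
      rename_i s
      have hs' : MeasurableSet[mΩ] s := hm s hs
      have heq : (fun ω => ⟪(SimpleFunc.piecewise s hs (SimpleFunc.const Ω c)
          (SimpleFunc.const Ω 0)) ω, Y ω⟫)
          = fun ω => Set.indicator s (fun ω' => ⟪c, Y ω'⟫) ω := by
        funext ω
        by_cases hω : ω ∈ s <;>
          simp [SimpleFunc.piecewise_apply, hω, Set.indicator_of_mem,
            Set.indicator_of_notMem, inner_zero_left]
      have h1 : ∫ ω, Set.indicator s (fun ω' => (⟪c, Y ω'⟫ : ℝ)) ω ∂μ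
          = ∫ ω in s, ⟪c, Y ω⟫ ∂μ := davis_indicator_integral μ hs' _
      rw [heq, h1, davis_inner_integral (μ.restrict s) (hY.mono_measure Measure.restrict_le_self) c, hY0 s hs,
        inner_zero_right]
    | add hdisj hφ hψ =>
      rename_i φ ψ
      have heq : (fun ω => ⟪(φ + ψ) ω, Y ω⟫)
          = fun ω => ⟪φ ω, Y ω⟫ + ⟪ψ ω, Y ω⟫ := by
        funext ω; simp [inner_add_left]
      rw [heq, integral_add (hint φ) (hint ψ), hφ, hψ, add_zero]
  have htend : Tendsto (fun k => ∫ ω, ⟪(hg.approxBounded 1 k) ω, Y ω⟫ ∂μ) atTop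
      (nhds (∫ ω, ⟪g ω, Y ω⟫ ∂μ)) := by
    refine tendsto_integral_of_dominated_convergence (fun ω => 1 * ‖Y ω‖)
      (fun k => (hint _).1) (hY.norm.const_mul 1) ?_ ?_
    · intro k
      exact Eventually.of_forall fun ω =>
        (norm_inner_le_norm _ _).trans
          (mul_le_mul_of_nonneg_right (hg.norm_approxBounded_le zero_le_one k ω)
            (norm_nonneg _))
    · exact Eventually.of_forall fun ω =>
        Tendsto.inner (hg.tendsto_approxBounded_of_norm_le (hgC ω)) tendsto_const_nhds
  have h0 : (fun k => ∫ ω, ⟪(hg.approxBounded 1 k) ω, Y ω⟫ ∂μ) = fun _ => (0:ℝ) :=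
    funext fun k => hsimple _
  rw [h0] at htend
  exact (tendsto_nhds_unique htend tendsto_const_nhds)

section mstarLemmas

variable {Ω X : Type*} [NormedAddCommGroup X] {f : ℕ → Ω → X}

lemma norm_le_mstar {n k : ℕ} (hk : k ≤ n) (ω : Ω) : ‖f k ω‖ ≤ mstar f n ω := by
  unfold mstar
  exact Finset.le_sup' (fun j => ‖f j ω‖) (Finset.mem_range.mpr (Nat.lt_succ_of_le hk))

lemma mstar_nonneg (f : ℕ → Ω → X) (n : ℕ) (ω : Ω) : 0 ≤ mstar f n ω :=
  (norm_nonneg (f 0 ω)).trans (norm_le_mstar (Nat.zero_le n) ω)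

lemma mstar_succ (f : ℕ → Ω → X) (n : ℕ) (ω : Ω) :
    mstar f (n+1) ω = max (mstar f n ω) ‖f (n+1) ω‖ := by
  apply le_antisymm
  · unfold mstar
    refine Finset.sup'_le _ _ fun k hk => ?_
    rcases Nat.lt_succ_iff_lt_or_eq.mp (Finset.mem_range.mp hk) with h | h
    · exact le_trans (norm_le_mstar (Nat.lt_succ_iff.mp h) ω) (le_max_left _ _)
    · rw [h]; exact le_max_right _ _
  · refine max_le ?_ ?_
    · unfold mstar
      refine Finset.sup'_le _ _ fun k hk => ?_
      exact Finset.le_sup' (fun j => ‖f j ω‖) (Finset.mem_range.mpr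
        (lt_trans (Finset.mem_range.mp hk) (Nat.lt_succ_self _)))
    · exact norm_le_mstar (le_refl (n+1)) ω

lemma mstar_le_sum (f : ℕ → Ω → X) (n : ℕ) (ω : Ω) :
    mstar f n ω ≤ ∑ k ∈ Finset.range (n+1), ‖f k ω‖ := by
  unfold mstar
  exact Finset.sup'_le _ _ fun k hk =>
    Finset.single_le_sum (f := fun j => ‖f j ω‖) (fun i _ => norm_nonneg _) hk

end mstarLemmas

/-- The sharp Davis inequality `E(S_N f) ≤ √3 E(f*_N)` for Hilbert-space-valued
martingales starting at 0. -/
theorem davis_sqrt_three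
    {Ω : Type*} {mΩ : MeasurableSpace Ω} {μ : Measure Ω} [IsProbabilityMeasure μ]
    {ℱ : Filtration ℕ mΩ}
    {H : Type*} [NormedAddCommGroup H] [InnerProductSpace ℝ H] [CompleteSpace H]
    (f : ℕ → Ω → H) (hf : Martingale f ℱ μ) (hf0 : f 0 = 0) (N : ℕ)
    (hS : Integrable (fun ω =>
      Real.sqrt (∑ n ∈ Finset.Icc 1 N, ‖f n ω - f (n-1) ω‖^2)) μ)
    (hMax : Integrable (fun ω => mstar f N ω) μ) :
    ∫ ω, Real.sqrt (∑ n ∈ Finset.Icc 1 N, ‖f n ω - f (n-1) ω‖^2) ∂μ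
      ≤ Real.sqrt 3 * ∫ ω, mstar f N ω ∂μ := by
  classical
  set Q : ℕ → Ω → ℝ := fun n ω => ∑ k ∈ Finset.Icc 1 n, ‖f k ω - f (k-1) ω‖^2 with hQdef
  set U : ℕ → Ω → ℝ := fun n ω =>
    (Q n ω - ‖f n ω‖^2 - (mstar f n ω)^2) / (mstar f n ω) - mstar f n ω with hUdef
  have hfm : ∀ n, StronglyMeasurable[ℱ n] (f n) := fun n => hf.1 n
  have hfsm : ∀ n : ℕ, StronglyMeasurable (f n) := fun n => (hfm n).mono (ℱ.le n)
  have hfi : ∀ n, Integrable (f n) μ := fun n => hf.integrable n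
  -- measurability of the running maximum
  have hMmeas : ∀ n, StronglyMeasurable[ℱ n] (fun ω => mstar f n ω) := by
    intro n
    induction n with
    | zero =>
      have h0 : (fun ω => mstar f 0 ω) = fun ω => ‖f 0 ω‖ := by
        funext ω; unfold mstar; simp
      rw [h0]; exact (hfm 0).norm
    | succ n ih =>
      have h1 : (fun ω => mstar f (n+1) ω) = fun ω => max (mstar f n ω) ‖f (n+1) ω‖ :=
        funext fun ω => mstar_succ f n ω
      rw [h1]
      exact ((ih.mono (ℱ.mono n.le_succ)).measurable.max
        (hfm (n+1)).norm.measurable).stronglyMeasurable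
  -- basic properties of Q
  have hQnn : ∀ n ω, 0 ≤ Q n ω := fun n ω => Finset.sum_nonneg fun k _ => sq_nonneg _
  have hQsucc : ∀ n ω, Q (n+1) ω = Q n ω + ‖f (n+1) ω - f n ω‖^2 := by
    intro n ω
    simp only [hQdef]
    rw [Finset.sum_Icc_succ_top (Nat.one_le_iff_ne_zero.mpr (Nat.succ_ne_zero n))]
    simp
  have hQzero : ∀ n ω, mstar f n ω = 0 → Q n ω = 0 := by
    intro n ω h
    have hz : ∀ k, k ≤ n → f k ω = 0 := fun k hk =>
      norm_le_zero_iff.1 ((norm_le_mstar hk ω).trans h.le)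
    refine Finset.sum_eq_zero fun k hk => ?_
    obtain ⟨h1, h2⟩ := Finset.mem_Icc.1 hk
    rw [hz k h2, hz (k-1) (le_trans (Nat.sub_le k 1) h2)]
    simp
  have hQmeas : ∀ n, Measurable (fun ω => Q n ω) := by
    intro n
    simp only [hQdef]
    exact Finset.measurable_sum _ fun k _ =>
      (((hfsm k).sub (hfsm (k-1))).norm.measurable).pow_const 2
  have hQle : ∀ n ω, Q n ω ≤ 4*n*(mstar f n ω)^2 := by
    intro n ω
    have hterm : ∀ k ∈ Finset.Icc 1 n, ‖f k ω - f (k-1) ω‖^2 ≤ 4*(mstar f n ω)^2 := by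
      intro k hk
      obtain ⟨h1, h2⟩ := Finset.mem_Icc.1 hk
      have hb : ‖f k ω - f (k-1) ω‖ ≤ 2 * mstar f n ω := by
        calc ‖f k ω - f (k-1) ω‖ ≤ ‖f k ω‖ + ‖f (k-1) ω‖ := norm_sub_le _ _
          _ ≤ mstar f n ω + mstar f n ω :=
            add_le_add (norm_le_mstar h2 ω) (norm_le_mstar (le_trans (Nat.sub_le k 1) h2) ω)
          _ = 2 * mstar f n ω := by ring
      calc ‖f k ω - f (k-1) ω‖^2 ≤ (2*mstar f n ω)^2 :=
            pow_le_pow_left₀ (norm_nonneg _) hb 2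
        _ = 4*(mstar f n ω)^2 := by ring
    calc Q n ω ≤ ∑ _k ∈ Finset.Icc 1 n, 4*(mstar f n ω)^2 := Finset.sum_le_sum hterm
      _ = ((Finset.Icc 1 n).card : ℝ) * (4*(mstar f n ω)^2) := by
          rw [Finset.sum_const, nsmul_eq_mul]
      _ ≤ 4*n*(mstar f n ω)^2 := by
          have hcard : ((Finset.Icc 1 n).card : ℝ) ≤ n := by
            rw [Nat.card_Icc]; push_cast [Nat.add_sub_cancel]; simp
          nlinarith [sq_nonneg (mstar f n ω)]
  -- integrability of the running maximum and of U
  have hMint : ∀ n, Integrable (fun ω => mstar f n ω) μ := by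
    intro n
    refine Integrable.mono'
      (integrable_finset_sum (Finset.range (n+1)) fun k _ => (hfi k).norm)
      (((hMmeas n).mono (ℱ.le n)).aestronglyMeasurable)
      (Eventually.of_forall fun ω => ?_)
    rw [Real.norm_eq_abs, abs_of_nonneg (mstar_nonneg f n ω)]
    exact mstar_le_sum f n ω
  have hUzero : ∀ n ω, mstar f n ω = 0 → U n ω = 0 := by
    intro n ω hm
    have hq := hQzero n ω hm
    have hfz : f n ω = 0 := norm_le_zero_iff.1 ((norm_le_mstar le_rfl ω).trans hm.le)
    simp only [hUdef]
    rw [hq, hfz, hm]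
    simp
  have hUbd : ∀ n ω, |U n ω| ≤ (4*n+3) * mstar f n ω := by
    intro n ω
    rcases eq_or_lt_of_le (mstar_nonneg f n ω) with hm | hm
    · rw [hUzero n ω hm.symm, ← hm]
      simp
    · have h1 : |Q n ω - ‖f n ω‖^2 - (mstar f n ω)^2| ≤ (4*n+2) * (mstar f n ω)^2 := by
        rw [abs_le]
        constructor
        · nlinarith [hQnn n ω, norm_le_mstar (f := f) (le_refl n) ω, norm_nonneg (f n ω),
            sq_nonneg (mstar f n ω)]
        · nlinarith [hQle n ω, norm_nonneg (f n ω), sq_nonneg (mstar f n ω),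
            sq_nonneg (‖f n ω‖)]
      have h2 : |(Q n ω - ‖f n ω‖^2 - (mstar f n ω)^2)/(mstar f n ω)|
          ≤ (4*n+2) * mstar f n ω := by
        rw [abs_div, abs_of_pos hm, div_le_iff₀ hm]
        calc |Q n ω - ‖f n ω‖^2 - (mstar f n ω)^2| ≤ (4*n+2) * (mstar f n ω)^2 := h1
          _ = (4*n+2) * mstar f n ω * mstar f n ω := by ring
      have htri : |U n ω| ≤ |(Q n ω - ‖f n ω‖^2 - (mstar f n ω)^2)/(mstar f n ω)|
          + |mstar f n ω| := by
        simp only [hUdef]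
        have h3 := abs_add_le ((Q n ω - ‖f n ω‖^2 - (mstar f n ω)^2)/(mstar f n ω))
          (-(mstar f n ω))
        simpa [sub_eq_add_neg, abs_neg] using h3
      rw [abs_of_pos hm] at htri
      calc |U n ω| ≤ (4*n+2) * mstar f n ω + mstar f n ω := by linarith
        _ = (4*n+3) * mstar f n ω := by ring
  have hUint : ∀ n, Integrable (U n) μ := by
    intro n
    have hMm : Measurable (fun ω => mstar f n ω) := ((hMmeas n).mono (ℱ.le n)).measurable
    have hmeas : Measurable (U n) := by
      simp only [hUdef]
      exact ((((hQmeas n).sub ((hfsm n).norm.measurable.pow_const 2)).sub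
        (hMm.pow_const 2)).div hMm).sub hMm
    refine Integrable.mono' ((hMint n).const_mul (4*n+3)) hmeas.aestronglyMeasurable
      (Eventually.of_forall fun ω => ?_)
    rw [Real.norm_eq_abs]
    exact hUbd n ω
  -- one-step inequality
  have hstep : ∀ n ω, U (n+1) ω ≤ U n ω
      - 2 * ⟪f n ω, f (n+1) ω - f n ω⟫ / mstar f n ω := by
    intro n ω
    have h := davis_key_ineq (f n ω) (f (n+1) ω - f n ω) (Q n ω) (mstar f n ω)
      (hQnn n ω) (norm_le_mstar le_rfl ω) (hQzero n ω)
    have hxd : f n ω + (f (n+1) ω - f n ω) = f (n+1) ω := by abel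
    rw [hxd, ← hQsucc n ω, ← mstar_succ f n ω] at h
    simpa only [hUdef] using h
  -- the cross term is integrable and has zero integral
  have hcross_int : ∀ n, Integrable
      (fun ω => 2 * ⟪f n ω, f (n+1) ω - f n ω⟫ / mstar f n ω) μ := by
    intro n
    have h1 : AEStronglyMeasurable (fun ω => (⟪f n ω, f (n+1) ω - f n ω⟫ : ℝ)) μ :=
      AEStronglyMeasurable.inner (hfsm n).aestronglyMeasurable
        ((hfsm (n+1)).sub (hfsm n)).aestronglyMeasurable
    have hmeas : AEMeasurable
        (fun ω => 2 * ⟪f n ω, f (n+1) ω - f n ω⟫ / mstar f n ω) μ :=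
      (h1.aemeasurable.const_mul 2).div
        (((hMmeas n).mono (ℱ.le n)).measurable.aemeasurable)
    refine Integrable.mono' (((hfi (n+1)).sub (hfi n)).norm.const_mul 2)
      hmeas.aestronglyMeasurable (Eventually.of_forall fun ω => ?_)
    have hb : |(⟪f n ω, f (n+1) ω - f n ω⟫ : ℝ)| ≤ ‖f n ω‖ * ‖f (n+1) ω - f n ω‖ :=
      abs_real_inner_le_norm _ _
    rcases eq_or_lt_of_le (mstar_nonneg f n ω) with hm | hm
    · have hfz : f n ω = 0 := norm_le_zero_iff.1 ((norm_le_mstar le_rfl ω).trans hm.symm.le)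
      rw [hfz]
      simp [Pi.sub_apply]
    · rw [Real.norm_eq_abs, abs_div, abs_of_pos hm, div_le_iff₀ hm, Pi.sub_apply]
      have hfnm : ‖f n ω‖ ≤ mstar f n ω := norm_le_mstar le_rfl ω
      have habs : |2 * (⟪f n ω, f (n+1) ω - f n ω⟫ : ℝ)|
          = 2 * |(⟪f n ω, f (n+1) ω - f n ω⟫ : ℝ)| := by
        rw [abs_mul]; norm_num
      rw [habs]
      nlinarith [norm_nonneg (f (n+1) ω - f n ω), hb, hfnm, hm,
        abs_nonneg (⟪f n ω, f (n+1) ω - f n ω⟫ : ℝ)]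
  have hcross0 : ∀ n, ∫ ω, 2 * ⟪f n ω, f (n+1) ω - f n ω⟫ / mstar f n ω ∂μ = 0 := by
    intro n
    have hginv : StronglyMeasurable[ℱ n] (fun ω => (mstar f n ω)⁻¹) :=
      ((hMmeas n).measurable.inv).stronglyMeasurable
    have hgm : StronglyMeasurable[ℱ n] (fun ω => (mstar f n ω)⁻¹ • f n ω) :=
      hginv.smul (hfm n)
    have hgC : ∀ ω, ‖(mstar f n ω)⁻¹ • f n ω‖ ≤ 1 := by
      intro ω
      rcases eq_or_lt_of_le (mstar_nonneg f n ω) with hm | hm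
      · rw [← hm]; simp
      · rw [norm_smul, Real.norm_eq_abs, abs_of_pos (inv_pos.2 hm)]
        calc (mstar f n ω)⁻¹ * ‖f n ω‖ ≤ (mstar f n ω)⁻¹ * mstar f n ω :=
              mul_le_mul_of_nonneg_left (norm_le_mstar le_rfl ω) (inv_pos.2 hm).le
          _ = 1 := inv_mul_cancel₀ (ne_of_gt hm)
    have hY0 : ∀ s : Set Ω, MeasurableSet[ℱ n] s →
        ∫ ω in s, (f (n+1) ω - f n ω) ∂μ = 0 := by
      intro s hs
      rw [integral_sub ((hfi (n+1)).mono_measure Measure.restrict_le_self)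
        ((hfi n).mono_measure Measure.restrict_le_self), sub_eq_zero]
      exact (hf.setIntegral_eq n.le_succ hs).symm
    have hkey := davis_integral_inner_zero (ℱ.le n) hgm hgC
      ((hfi (n+1)).sub (hfi n)) hY0
    have heq : (fun ω => 2 * ⟪f n ω, f (n+1) ω - f n ω⟫ / mstar f n ω)
        = fun ω => 2 * ⟪(mstar f n ω)⁻¹ • f n ω, f (n+1) ω - f n ω⟫ := by
      funext ω
      rw [real_inner_smul_left]
      ring
    rw [heq]
    rw [integral_const_mul]
    simp only [Pi.sub_apply] at hkey
    rw [hkey, mul_zero]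
  -- the expectation of U is non-increasing, hence ≤ 0
  have hUN : ∀ n, ∫ ω, U n ω ∂μ ≤ 0 := by
    intro n
    induction n with
    | zero =>
      have h0 : (fun ω => U 0 ω) = fun _ => (0:ℝ) := by
        funext ω
        refine hUzero 0 ω ?_
        unfold mstar
        simp [hf0]
      rw [h0, integral_zero]
    | succ n ih =>
      have h1 : ∫ ω, U (n+1) ω ∂μ ≤ ∫ ω, (U n ω
          - 2 * ⟪f n ω, f (n+1) ω - f n ω⟫ / mstar f n ω) ∂μ :=
        integral_mono (hUint (n+1)) ((hUint n).sub (hcross_int n)) (hstep n)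
      rw [integral_sub (hUint n) (hcross_int n), hcross0 n, sub_zero] at h1
      exact h1.trans ih
  -- the main L¹ bound for Q/M
  have hRmeas : Measurable (fun ω => Q N ω / mstar f N ω) :=
    (hQmeas N).div ((hMmeas N).mono (ℱ.le N)).measurable
  have hRbd : ∀ ω, |Q N ω / mstar f N ω| ≤ (4*N) * mstar f N ω := by
    intro ω
    rcases eq_or_lt_of_le (mstar_nonneg f N ω) with hm | hm
    · rw [← hm, div_zero]
      simp
    · rw [abs_div, abs_of_pos hm, abs_of_nonneg (hQnn N ω), div_le_iff₀ hm]
      calc Q N ω ≤ 4*N*(mstar f N ω)^2 := hQle N ω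
        _ = 4*N*mstar f N ω * mstar f N ω := by ring
  have hRint : Integrable (fun ω => Q N ω / mstar f N ω) μ := by
    refine Integrable.mono' ((hMint N).const_mul (4*N)) hRmeas.aestronglyMeasurable
      (Eventually.of_forall fun ω => ?_)
    rw [Real.norm_eq_abs]
    exact hRbd ω
  have hRle : ∀ ω, Q N ω / mstar f N ω ≤ U N ω + 3 * mstar f N ω := by
    intro ω
    rcases eq_or_lt_of_le (mstar_nonneg f N ω) with hm | hm
    · rw [← hm, div_zero]
      rw [show U N ω = 0 from hUzero N ω hm.symm]
      simp
    · have hfnm : ‖f N ω‖ ≤ mstar f N ω := norm_le_mstar le_rfl ω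
      have hd : (U N ω + 3 * mstar f N ω) - Q N ω / mstar f N ω
          = ((mstar f N ω)^2 - ‖f N ω‖^2) / mstar f N ω := by
        simp only [hUdef]
        field_simp
        ring
      have : 0 ≤ ((mstar f N ω)^2 - ‖f N ω‖^2) / mstar f N ω :=
        div_nonneg (by nlinarith [norm_nonneg (f N ω)]) hm.le
      linarith [hd ▸ this]
  have hQMle : ∫ ω, Q N ω / mstar f N ω ∂μ ≤ 3 * ∫ ω, mstar f N ω ∂μ := by
    have h1 : ∫ ω, Q N ω / mstar f N ω ∂μ
        ≤ ∫ ω, (U N ω + 3 * mstar f N ω) ∂μ :=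
      integral_mono hRint ((hUint N).add ((hMint N).const_mul 3)) hRle
    rw [integral_add (hUint N) ((hMint N).const_mul 3), integral_const_mul] at h1
    linarith [hUN N]
  -- final assembly via pointwise AM–GM
  have h3pos : (0:ℝ) < Real.sqrt 3 := Real.sqrt_pos.2 (by norm_num)
  have h3sq : Real.sqrt 3 * Real.sqrt 3 = 3 := Real.mul_self_sqrt (by norm_num)
  have hpt : ∀ ω, Real.sqrt (Q N ω)
      ≤ (Q N ω / mstar f N ω) / (2*Real.sqrt 3) + Real.sqrt 3 / 2 * mstar f N ω := by
    intro ω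
    rcases eq_or_lt_of_le (mstar_nonneg f N ω) with hm | hm
    · rw [hQzero N ω hm.symm, ← hm]
      simp
    · have hq := hQnn N ω
      have hsq : Real.sqrt (Q N ω) * Real.sqrt (Q N ω) = Q N ω := Real.mul_self_sqrt hq
      have hsn : 0 ≤ Real.sqrt (Q N ω) := Real.sqrt_nonneg _
      have key : Real.sqrt (Q N ω) * (2*Real.sqrt 3 * mstar f N ω)
          ≤ Q N ω + 3*(mstar f N ω)^2 := by
        nlinarith [sq_nonneg (Real.sqrt (Q N ω) - Real.sqrt 3 * mstar f N ω)]
      have h2 : (Q N ω / mstar f N ω) / (2*Real.sqrt 3) + Real.sqrt 3 / 2 * mstar f N ω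
          = (Q N ω + 3*(mstar f N ω)^2) / (2*Real.sqrt 3 * mstar f N ω) := by
        rw [div_div]
        rw [eq_div_iff (by positivity)]
        field_simp
        linear_combination ((mstar f N ω)^2) * h3sq
      rw [h2, le_div_iff₀ (by positivity)]
      linarith
  have hint2 : Integrable (fun ω =>
      (Q N ω / mstar f N ω) / (2*Real.sqrt 3) + Real.sqrt 3 / 2 * mstar f N ω) μ :=
    (hRint.div_const _).add ((hMint N).const_mul _)
  have hfinal : ∫ ω, Real.sqrt (Q N ω) ∂μ
      ≤ (∫ ω, Q N ω / mstar f N ω ∂μ) / (2*Real.sqrt 3)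
        + Real.sqrt 3 / 2 * ∫ ω, mstar f N ω ∂μ := by
    have h1 : ∫ ω, Real.sqrt (Q N ω) ∂μ ≤ ∫ ω,
        ((Q N ω / mstar f N ω) / (2*Real.sqrt 3) + Real.sqrt 3 / 2 * mstar f N ω) ∂μ :=
      integral_mono hS hint2 hpt
    rwa [integral_add (hRint.div_const _) ((hMint N).const_mul _),
      integral_div, integral_const_mul] at h1
  have hMnonneg : 0 ≤ ∫ ω, mstar f N ω ∂μ := integral_nonneg fun ω => mstar_nonneg f N ω
  have hlast : (∫ ω, Q N ω / mstar f N ω ∂μ) / (2*Real.sqrt 3)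
      + Real.sqrt 3 / 2 * ∫ ω, mstar f N ω ∂μ
      ≤ Real.sqrt 3 * ∫ ω, mstar f N ω ∂μ := by
    have hd : (∫ ω, Q N ω / mstar f N ω ∂μ) / (2*Real.sqrt 3)
        ≤ (3 * ∫ ω, mstar f N ω ∂μ) / (2*Real.sqrt 3) :=
      (div_le_div_iff_of_pos_right (by positivity)).2 hQMle
    have he : (3 * ∫ ω, mstar f N ω ∂μ) / (2*Real.sqrt 3)
        = Real.sqrt 3 / 2 * ∫ ω, mstar f N ω ∂μ := by
      field_simp
      nlinarith [h3sq]
    rw [he] at hd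
    linarith
  exact hfinal.trans hlast
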